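/- In the symmetric satisficing duopoly with uniform willingness-to-pay on [0,1], the price vector (p1,p2) = (1/2, 3/8) is a pure-strategy Nash equilibrium: p1 = 1/2 globally maximizes p ↦ R1(p, 3/8) on [0,1] and p2 = 3/8 globally maximizes p ↦ R2(1/2, p) on [0,1], where Ri(pi,pj) = pi*((1/2)(1-pi) + (1/2)max(pj-pi,0)). -/
import Mathlib

/-- Seller `i`'s revenue in the symmetric satisficing duopoly:
`Rev pi pj` is the revenue of the seller pricing at `pi` when the other seller prices at `pj`. -/
noncomputable def Rev (pi pj : ℝ) : ℝ :=
  pi * ((1 / 2) * (1 - pi) + (1 / 2) * max (pj - pi) 0)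

/-- `(1/2, 3/8)` is a pure-strategy Nash equilibrium: each price globally maximizes
the corresponding seller's revenue on `[0,1]` given the other's price. -/
theorem stmt1 :
    (∀ p ∈ Set.Icc (0 : ℝ) 1, Rev p (3 / 8) ≤ Rev (1 / 2) (3 / 8)) ∧
    (∀ p ∈ Set.Icc (0 : ℝ) 1, Rev p (1 / 2) ≤ Rev (3 / 8) (1 / 2)) := by
  constructor <;> rintro p ⟨hp0, hp1⟩ <;> unfold Rev <;> norm_num
  · rcases max_cases ((3/8 : ℝ) - p) 0 with ⟨he, hle⟩ | ⟨he, hle⟩ <;> rw [he] <;>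
      nlinarith [sq_nonneg (p - 11/32), sq_nonneg (p - 1/2)]
  · rcases max_cases ((1/2 : ℝ) - p) 0 with ⟨he, hle⟩ | ⟨he, hle⟩ <;> rw [he] <;>
      nlinarith [sq_nonneg (p - 3/8), sq_nonneg (p - 1/2)]
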